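/- Let h : ℕ → ℕ be monotone and inflationary, n ∈ ℕ, and N0 ≥ n + 1. Then every (N0,h)-controlled strictly descending sequence of ordinals below ω^{n+1} has length at most h_{ω^{n+1}}(N0), and there exists an (N0,h)-controlled strictly descending sequence of ordinals below ω^{n+1} of length exactly h_{ω^{n+1}}(N0), where (h_α)_{α≤ω^ω} is the Cichoń hierarchy relative to h. -/

import Mathlib

noncomputable section

namespace HardyCNF

open Ordinal

/-- Find the first nonzero entry of a (little-endian) coefficient list:
returns `(k, c, rest)` when the list is `replicate k 0 ++ (c+1) :: rest`. -/
def splitNZ : List ℕ → Option (ℕ × ℕ × List ℕ)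
  | [] => none
  | 0 :: t => (splitNZ t).map (fun x => (x.1 + 1, x.2))
  | (c+1) :: t => some (0, c, t)

theorem splitNZ_eq : ∀ {ℓ : List ℕ} {k c : ℕ} {r : List ℕ},
    splitNZ ℓ = some (k, c, r) → ℓ = List.replicate k 0 ++ (c+1) :: r := by
  intro ℓ
  induction ℓ with
  | nil => intro k c r h; simp [splitNZ] at h
  | cons hd t ih =>
    intro k c r h
    match hd with
    | 0 =>
      simp only [splitNZ, Option.map_eq_some_iff] at h
      obtain ⟨⟨k', c', r'⟩, hs, he⟩ := h
      obtain ⟨h1, h2, h3⟩ : k' + 1 = k ∧ c' = c ∧ r' = r := by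
        simpa using he
      subst h1 h2 h3
      simp [List.replicate_succ, ih hs]
    | c'+1 =>
      simp only [splitNZ, Option.some.injEq] at h
      obtain ⟨h1, h2, h3⟩ : (0 : ℕ) = k ∧ c' = c ∧ t = r := by simpa using h
      subst h1 h2 h3
      simp

/-- The ordinal `ω^0·c_0 + ω^1·c_1 + ⋯` denoted by a little-endian coefficient list. -/
def toOrd : List ℕ → Ordinal.{0}
  | [] => 0
  | c :: ℓ => omega0 * toOrd ℓ + c

theorem toOrd_replicate_zero_append (k : ℕ) (ℓ : List ℕ) :
    toOrd (List.replicate k 0 ++ ℓ) = omega0 ^ (k : Ordinal) * toOrd ℓ := by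
  induction k with
  | zero => simp [toOrd]
  | succ n ih =>
    rw [List.replicate_succ, List.cons_append]
    show omega0 * toOrd (List.replicate n 0 ++ ℓ) + (0:ℕ) = _
    rw [ih]
    have hcast : ((n+1 : ℕ) : Ordinal) = 1 + (n : Ordinal) := by
      have : ((1+n : ℕ) : Ordinal) = 1 + (n : Ordinal) := by push_cast; ring_nf
      rw [← this, Nat.add_comm]
    rw [hcast, opow_add, opow_one, mul_assoc]
    simp

theorem toOrd_succ_lt (c : ℕ) (ℓ : List ℕ) : toOrd (c :: ℓ) < toOrd ((c+1) :: ℓ) := by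
  show omega0 * toOrd ℓ + (c : Ordinal) < omega0 * toOrd ℓ + ((c:ℕ)+1 : ℕ)
  apply add_lt_add_of_le_of_lt le_rfl
  push_cast
  exact lt_add_one _

theorem toOrd_limit_lt (x k c : ℕ) (r : List ℕ) :
    toOrd (List.replicate k 0 ++ (x+1) :: c :: r) <
      toOrd (0 :: (List.replicate k 0 ++ (c+1) :: r)) := by
  have h0 : toOrd (0 :: (List.replicate k 0 ++ (c+1) :: r))
      = omega0 * (omega0 ^ (k : Ordinal) * toOrd ((c+1) :: r)) := by
    show omega0 * toOrd (List.replicate k 0 ++ (c+1) :: r) + (0:ℕ) = _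
    rw [toOrd_replicate_zero_append]; simp
  have hsw : omega0 * omega0 ^ (k : Ordinal) = omega0 ^ (k : Ordinal) * omega0 := by
    have hcast : ((k+1 : ℕ) : Ordinal) = 1 + (k : Ordinal) := by
      have : ((1+k : ℕ) : Ordinal) = 1 + (k : Ordinal) := by push_cast; ring_nf
      rw [← this, Nat.add_comm]
    have h1 : omega0 * omega0 ^ (k : Ordinal) = omega0 ^ ((k+1 : ℕ) : Ordinal) := by
      rw [hcast, opow_add, opow_one]
    have h2 : omega0 ^ (k : Ordinal) * omega0 = omega0 ^ ((k+1 : ℕ) : Ordinal) := by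
      push_cast
      rw [opow_add, opow_one]
    rw [h1, h2]
  rw [h0, toOrd_replicate_zero_append, ← mul_assoc, hsw, mul_assoc]
  refine mul_lt_mul_of_pos_left ?_ (opow_pos (k : Ordinal) omega0_pos)
  show omega0 * toOrd (c :: r) + ((x:ℕ)+1 : ℕ) < omega0 * toOrd ((c+1) :: r)
  have hc : toOrd ((c+1) :: r) = toOrd (c :: r) + 1 := by
    show omega0 * toOrd r + ((c:ℕ)+1:ℕ) = (omega0 * toOrd r + c) + 1
    push_cast; rw [add_assoc]
  rw [hc, mul_add, mul_one]
  apply add_lt_add_of_le_of_lt le_rfl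
  exact nat_lt_omega0 (x+1)

/-- The Hardy hierarchy `h^α` relative to `h`, for `α < ω^ω` given in Cantor normal
form by a little-endian coefficient list:  `h^0(x) = x`, `h^{α+1}(x) = h^α(h x)`,
`h^λ(x) = h^{λ(x)}(x)` with the standard fundamental sequences. -/
def hardy (h : ℕ → ℕ) : List ℕ → ℕ → ℕ
  | [], x => x
  | (c+1) :: ℓ, x => hardy h (c :: ℓ) (h x)
  | 0 :: ℓ, x =>
    match hs : splitNZ ℓ with
    | none => x
    | some (k, c, r) => hardy h (List.replicate k 0 ++ (x+1) :: c :: r) x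
  termination_by ℓ _ => toOrd ℓ
  decreasing_by
  · exact toOrd_succ_lt c ℓ
  · rw [splitNZ_eq hs]; exact toOrd_limit_lt x k c r

/-- The Cichoń hierarchy `h_α` relative to `h`:  `h_0(x) = 0`,
`h_{α+1}(x) = 1 + h_α(h x)`, `h_λ(x) = h_{λ(x)}(x)`. -/
def cichon (h : ℕ → ℕ) : List ℕ → ℕ → ℕ
  | [], _ => 0
  | (c+1) :: ℓ, x => 1 + cichon h (c :: ℓ) (h x)
  | 0 :: ℓ, x =>
    match hs : splitNZ ℓ with
    | none => 0
    | some (k, c, r) => cichon h (List.replicate k 0 ++ (x+1) :: c :: r) x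
  termination_by ℓ _ => toOrd ℓ
  decreasing_by
  · exact toOrd_succ_lt c ℓ
  · rw [splitNZ_eq hs]; exact toOrd_limit_lt x k c r

/-- An ordinal index `≤ ω^ω`: either `α < ω^ω` given by its CNF coefficient list,
or `ω^ω` itself (represented by `none`). -/
abbrev OrdIdx := Option (List ℕ)

/-- the CNF coefficient list of `ω^k` -/
def omegaPow (k : ℕ) : List ℕ := List.replicate k 0 ++ [1]

/-- Hardy hierarchy for indices `α ≤ ω^ω`, using `ω^ω(x) = ω^{x+1}`. -/
def hardyTop (h : ℕ → ℕ) : OrdIdx → ℕ → ℕ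
  | some ℓ, x => hardy h ℓ x
  | none, x => hardy h (omegaPow (x+1)) x

/-- Cichoń hierarchy for indices `α ≤ ω^ω`. -/
def cichonTop (h : ℕ → ℕ) : OrdIdx → ℕ → ℕ
  | some ℓ, x => cichon h ℓ x
  | none, x => cichon h (omegaPow (x+1)) x

end HardyCNF

namespace HardyCNF

/-- The degree (largest exponent with a nonzero coefficient) of the ordinal with
little-endian CNF coefficient list `ℓ` (0 for the ordinal 0). -/
def degree (ℓ : List ℕ) : ℕ :=
  ((List.range ℓ.length).filter (fun i => ℓ.getD i 0 ≠ 0)).foldr max 0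

/-- The size `‖α‖ = max {n, c_0, …, c_n}` of an ordinal
`α = ω^n·c_n + ⋯ + ω^0·c_0 < ω^ω`. -/
def cnfNorm (ℓ : List ℕ) : ℕ := max (degree ℓ) (ℓ.foldr max 0)

end HardyCNF

/-!
For `α ≠ 0` the Cichoń hierarchy unfolds along predecessors: `h_α(x) = 1 + h_{P_x(α)}(h x)`,
where `P_x(α)` is the largest ordinal below `α` all of whose CNF coefficients are `≤ x`, since
unfolding a limit `β + ω^(k+1)` down to a successor gives `β + ω^k·x + ⋯ + ω·x + x + 1`.
The first term of a controlled descending sequence below `α` is therefore `≤ P_x(α)`, so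
induction on the length gives the upper bound. The greedy sequence
`P_x(α), P_{h x}(P_x(α)), …` attains it; its `i`-th term has coefficients `≤ h^i(N0)` and a
CNF list no longer than that of `ω^{n+1}`, so it is `(N0, h)`-controlled once `N0 ≥ n + 1`.
-/

namespace HardyCNF

open Ordinal

theorem toOrd_cons (c : ℕ) (t : List ℕ) : toOrd (c :: t) = ω * toOrd t + c := rfl

theorem toOrd_succ_cons (c : ℕ) (t : List ℕ) : toOrd ((c + 1) :: t) = toOrd (c :: t) + 1 := by
  rw [toOrd_cons, toOrd_cons, Nat.cast_succ, add_assoc]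

theorem toOrd_zero_cons_eq_zero_iff (t : List ℕ) : toOrd (0 :: t) = 0 ↔ toOrd t = 0 := by
  simp [toOrd_cons, omega0_ne_zero]

theorem toOrd_cons_le_cons {a b : ℕ} {s t : List ℕ} (hab : a ≤ b) (hst : toOrd s ≤ toOrd t) :
    toOrd (a :: s) ≤ toOrd (b :: t) :=
  add_le_add (mul_le_mul_right hst _) (Nat.cast_le.mpr hab)

theorem toOrd_cons_lt_cons (a b : ℕ) {s t : List ℕ} (hst : toOrd s < toOrd t) :
    toOrd (a :: s) < toOrd (b :: t) :=
  calc toOrd (a :: s) < ω * toOrd s + ω := add_lt_add_right (natCast_lt_omega0 a) _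
    _ = ω * (toOrd s + 1) := (mul_add_one _ _).symm
    _ ≤ ω * toOrd t := mul_le_mul_right (Order.add_one_le_of_lt hst) _
    _ ≤ toOrd (b :: t) := le_self_add

theorem toOrd_replicate_zero (k : ℕ) : toOrd (List.replicate k 0) = 0 := by
  simpa [toOrd] using toOrd_replicate_zero_append k []

theorem toOrd_replicate_zero_append_succ_ne_zero (k c : ℕ) (r : List ℕ) :
    toOrd (List.replicate k 0 ++ (c + 1) :: r) ≠ 0 := by
  rw [toOrd_replicate_zero_append, toOrd_succ_cons]
  exact mul_ne_zero (opow_ne_zero _ omega0_ne_zero) (add_pos_of_right zero_lt_one _).ne'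

theorem toOrd_omegaPow (k : ℕ) : toOrd (omegaPow k) = ω ^ (k : Ordinal) := by
  simp [omegaPow, toOrd_replicate_zero_append, toOrd]

theorem eq_replicate_zero_or_eq_replicate_zero_append_succ (ℓ : List ℕ) :
    (∃ k, ℓ = List.replicate k 0) ∨ ∃ k c r, ℓ = List.replicate k 0 ++ (c + 1) :: r := by
  induction ℓ with
  | nil => exact Or.inl ⟨0, rfl⟩
  | cons a t ih =>
    cases a with
    | succ c => exact Or.inr ⟨0, c, t, rfl⟩
    | zero =>
      rcases ih with ⟨k, rfl⟩ | ⟨k, c, r, rfl⟩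
      · exact Or.inl ⟨k + 1, rfl⟩
      · exact Or.inr ⟨k + 1, c, r, rfl⟩

def maxCoeff (ℓ : List ℕ) : ℕ := ℓ.foldr max 0

theorem maxCoeff_le_cnfNorm (ℓ : List ℕ) : maxCoeff ℓ ≤ cnfNorm ℓ := le_max_right _ _

theorem cnfNorm_le_of_length_le {ℓ : List ℕ} {K : ℕ} (hlen : ℓ.length ≤ K + 1)
    (hcoeff : maxCoeff ℓ ≤ K) : cnfNorm ℓ ≤ K := by
  refine max_le (List.max_le_of_forall_le _ _ fun i hi => ?_) hcoeff
  rw [List.mem_filter, List.mem_range] at hi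
  omega

theorem length_omegaPow (k : ℕ) : (omegaPow k).length = k + 1 := by
  simp [omegaPow]

theorem maxCoeff_omegaPow (k : ℕ) : maxCoeff (omegaPow k) = 1 := by
  induction k with
  | zero => rfl
  | succ k ih => simpa [omegaPow, maxCoeff, List.replicate_succ] using ih

section cnfPred

/-- The predecessor `P_x(α)` of `α = toOrd ℓ`: the largest ordinal below `α` whose CNF
coefficients are all `≤ x` (and `0` when `α = 0`). -/
def cnfPred (x : ℕ) : List ℕ → List ℕ
  | [] => []
  | (c + 1) :: t => c :: t
  | 0 :: t => if toOrd t = 0 then [] else x :: cnfPred x t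

variable (x : ℕ)

theorem cnfPred_zero_cons {t : List ℕ} (ht : toOrd t ≠ 0) :
    cnfPred x (0 :: t) = x :: cnfPred x t := if_neg ht

theorem cnfPred_replicate_zero_append_succ (k c : ℕ) (r : List ℕ) :
    cnfPred x (List.replicate k 0 ++ (c + 1) :: r) = List.replicate k x ++ c :: r := by
  induction k with
  | zero => rfl
  | succ k ih =>
    rw [List.replicate_succ, List.cons_append,
      cnfPred_zero_cons x (toOrd_replicate_zero_append_succ_ne_zero k c r), ih]
    rfl

theorem toOrd_cnfPred_lt {ℓ : List ℕ} (hℓ : toOrd ℓ ≠ 0) : toOrd (cnfPred x ℓ) < toOrd ℓ := by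
  induction ℓ with
  | nil => exact absurd rfl hℓ
  | cons a t ih =>
    cases a with
    | succ c => rw [toOrd_succ_cons]; exact Order.lt_add_one_iff.mpr le_rfl
    | zero =>
      have ht : toOrd t ≠ 0 := mt (toOrd_zero_cons_eq_zero_iff t).mpr hℓ
      rw [cnfPred_zero_cons x ht]
      exact toOrd_cons_lt_cons x 0 (ih ht)

theorem toOrd_le_cnfPred {m ℓ : List ℕ} (hlt : toOrd m < toOrd ℓ) (hm : maxCoeff m ≤ x) :
    toOrd m ≤ toOrd (cnfPred x ℓ) := by
  induction ℓ generalizing m with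
  | nil => exact absurd hlt not_lt_zero
  | cons a t ih =>
    cases a with
    | succ c => rw [toOrd_succ_cons] at hlt; exact Order.lt_add_one_iff.mp hlt
    | zero =>
      have ht : toOrd t ≠ 0 := fun ht =>
        absurd hlt (by rw [(toOrd_zero_cons_eq_zero_iff t).mpr ht]; exact not_lt_zero)
      rw [cnfPred_zero_cons x ht]
      cases m with
      | nil => exact zero_le
      | cons a s =>
        obtain ⟨ha, hs⟩ := max_le_iff.mp hm
        have hst : toOrd s < toOrd t :=
          lt_of_not_ge fun hts => hlt.not_ge (toOrd_cons_le_cons (Nat.zero_le a) hts)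
        exact toOrd_cons_le_cons ha (ih hst hs)

theorem length_cnfPred_le (ℓ : List ℕ) : (cnfPred x ℓ).length ≤ ℓ.length := by
  induction ℓ with
  | nil => exact le_rfl
  | cons a t ih =>
    cases a with
    | succ c => exact le_rfl
    | zero =>
      by_cases ht : toOrd t = 0
      · simp [cnfPred, ht]
      · rw [cnfPred_zero_cons x ht]
        exact Nat.succ_le_succ ih

theorem maxCoeff_cnfPred_le (ℓ : List ℕ) : maxCoeff (cnfPred x ℓ) ≤ max x (maxCoeff ℓ) := by
  induction ℓ with
  | nil => exact Nat.zero_le _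
  | cons a t ih =>
    cases a with
    | succ c => simp only [cnfPred, maxCoeff, List.foldr_cons] at *; omega
    | zero =>
      by_cases ht : toOrd t = 0
      · simp [cnfPred, ht, maxCoeff]
      · rw [cnfPred_zero_cons x ht]
        simp only [maxCoeff, List.foldr_cons] at *
        omega

end cnfPred

section cichon

variable (h : ℕ → ℕ)

theorem splitNZ_replicate_zero (k : ℕ) : splitNZ (List.replicate k 0) = none := by
  induction k with
  | zero => rfl
  | succ k ih => simp [List.replicate_succ, splitNZ, ih]

theorem splitNZ_replicate_zero_append_succ (k c : ℕ) (r : List ℕ) :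
    splitNZ (List.replicate k 0 ++ (c + 1) :: r) = some (k, c, r) := by
  induction k with
  | zero => rfl
  | succ k ih => simp [List.replicate_succ, splitNZ, ih]

theorem cichon_replicate_zero (k x : ℕ) : cichon h (List.replicate k 0) x = 0 := by
  cases k with
  | zero => rw [List.replicate_zero, cichon]
  | succ k => rw [List.replicate_succ, cichon, splitNZ_replicate_zero]

theorem cichon_replicate_zero_append_succ (k c x : ℕ) (r : List ℕ) :
    cichon h (List.replicate k 0 ++ (c + 1) :: r) x =
      1 + cichon h (List.replicate k x ++ c :: r) (h x) := by
  induction k generalizing c r with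
  | zero => rw [List.replicate_zero, List.nil_append, cichon]; rfl
  | succ k ih =>
    rw [List.replicate_succ, List.cons_append, cichon, splitNZ_replicate_zero_append_succ]
    dsimp only
    rw [ih, List.replicate_succ', List.append_assoc]
    rfl

theorem cichon_eq_zero_of_toOrd_eq_zero {ℓ : List ℕ} (hℓ : toOrd ℓ = 0) (x : ℕ) :
    cichon h ℓ x = 0 := by
  obtain ⟨k, rfl⟩ | ⟨k, c, r, rfl⟩ := eq_replicate_zero_or_eq_replicate_zero_append_succ ℓ
  · exact cichon_replicate_zero h k x
  · exact absurd hℓ (toOrd_replicate_zero_append_succ_ne_zero k c r)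

theorem cichon_eq_one_add_cichon_cnfPred {ℓ : List ℕ} (hℓ : toOrd ℓ ≠ 0) (x : ℕ) :
    cichon h ℓ x = 1 + cichon h (cnfPred x ℓ) (h x) := by
  obtain ⟨k, rfl⟩ | ⟨k, c, r, rfl⟩ := eq_replicate_zero_or_eq_replicate_zero_append_succ ℓ
  · exact absurd (toOrd_replicate_zero k) hℓ
  · rw [cichon_replicate_zero_append_succ, cnfPred_replicate_zero_append_succ]

theorem le_cichon_of_descending (L : ℕ) {ℓ : List ℕ} {x : ℕ} {f : ℕ → List ℕ}
    (hf0 : 0 < L → toOrd (f 0) < toOrd ℓ)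
    (hdesc : ∀ i, i + 1 < L → toOrd (f (i + 1)) < toOrd (f i))
    (hcoeff : ∀ i, i < L → maxCoeff (f i) ≤ h^[i] x) :
    L ≤ cichon h ℓ x := by
  induction L generalizing ℓ x f with
  | zero => exact Nat.zero_le _
  | succ L ih =>
    have hlt : toOrd (f 0) < toOrd ℓ := hf0 L.succ_pos
    have hℓ : toOrd ℓ ≠ 0 := (lt_of_le_of_lt zero_le hlt).ne'
    have hle : toOrd (f 0) ≤ toOrd (cnfPred x ℓ) := toOrd_le_cnfPred x hlt (hcoeff 0 L.succ_pos)
    have htail : L ≤ cichon h (cnfPred x ℓ) (h x) :=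
      ih (fun hL => (hdesc 0 (by omega)).trans_le hle) (fun i hi => hdesc (i + 1) (by omega))
        (fun i hi => by simpa only [Function.iterate_succ_apply] using hcoeff (i + 1) (by omega))
    rw [cichon_eq_one_add_cichon_cnfPred h hℓ]
    omega

/-- `greedySeq h ℓ x i = P_{h^i x}(⋯ P_{h x}(P_x ℓ))`. -/
def greedySeq : List ℕ → ℕ → ℕ → List ℕ
  | ℓ, x, 0 => cnfPred x ℓ
  | ℓ, x, i + 1 => greedySeq (cnfPred x ℓ) (h x) i

theorem toOrd_ne_zero_of_cichon_pos {ℓ : List ℕ} {x : ℕ} (hpos : 0 < cichon h ℓ x) :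
    toOrd ℓ ≠ 0 :=
  fun hℓ => hpos.ne' (cichon_eq_zero_of_toOrd_eq_zero h hℓ x)

theorem toOrd_greedySeq_lt (i : ℕ) {ℓ : List ℕ} {x : ℕ} (hi : i < cichon h ℓ x) :
    toOrd (greedySeq h ℓ x i) < toOrd ℓ := by
  have hℓ := toOrd_ne_zero_of_cichon_pos h (Nat.zero_lt_of_lt hi)
  induction i generalizing ℓ x with
  | zero => exact toOrd_cnfPred_lt x hℓ
  | succ i ih =>
    rw [cichon_eq_one_add_cichon_cnfPred h hℓ] at hi
    have hi' : i < cichon h (cnfPred x ℓ) (h x) := by omega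
    exact (ih hi' (toOrd_ne_zero_of_cichon_pos h (Nat.zero_lt_of_lt hi'))).trans
      (toOrd_cnfPred_lt x hℓ)

theorem toOrd_greedySeq_succ_lt (i : ℕ) {ℓ : List ℕ} {x : ℕ} (hi : i + 1 < cichon h ℓ x) :
    toOrd (greedySeq h ℓ x (i + 1)) < toOrd (greedySeq h ℓ x i) := by
  have hℓ := toOrd_ne_zero_of_cichon_pos h (Nat.zero_lt_of_lt hi)
  rw [cichon_eq_one_add_cichon_cnfPred h hℓ] at hi
  cases i with
  | zero => exact toOrd_greedySeq_lt h 0 (by omega)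
  | succ i => exact toOrd_greedySeq_succ_lt i (by omega)

theorem length_greedySeq_le (i : ℕ) (ℓ : List ℕ) (x : ℕ) :
    (greedySeq h ℓ x i).length ≤ ℓ.length := by
  induction i generalizing ℓ x with
  | zero => exact length_cnfPred_le x ℓ
  | succ i ih => exact (ih _ _).trans (length_cnfPred_le x ℓ)

theorem maxCoeff_greedySeq_le (hinfl : ∀ x, x ≤ h x) (i : ℕ) (ℓ : List ℕ) (x : ℕ) :
    maxCoeff (greedySeq h ℓ x i) ≤ max (h^[i] x) (maxCoeff ℓ) := by
  induction i generalizing ℓ x with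
  | zero => exact maxCoeff_cnfPred_le x ℓ
  | succ i ih =>
    have hx : x ≤ h^[i + 1] x := Function.id_le_iterate_of_id_le hinfl (i + 1) x
    have := maxCoeff_cnfPred_le x ℓ
    rw [Function.iterate_succ_apply] at hx ⊢
    exact (ih _ _).trans (by omega)

end cichon

end HardyCNF

open HardyCNF in
theorem length_function_theorem_general (h : ℕ → ℕ)
    (hinfl : ∀ x, x ≤ h x)
    (n N0 : ℕ) (hN0 : n + 1 ≤ N0) :
    (∀ (L : ℕ) (f : ℕ → List ℕ),
      (∀ i, i < L → toOrd (f i) < Ordinal.omega0 ^ ((n + 1 : ℕ) : Ordinal)) →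
      (∀ i, i + 1 < L → toOrd (f (i + 1)) < toOrd (f i)) →
      (∀ i, i < L → cnfNorm (f i) ≤ h^[i] N0) →
      L ≤ cichon h (omegaPow (n + 1)) N0) ∧
    (∃ f : ℕ → List ℕ,
      (∀ i, i < cichon h (omegaPow (n + 1)) N0 →
        toOrd (f i) < Ordinal.omega0 ^ ((n + 1 : ℕ) : Ordinal)) ∧
      (∀ i, i + 1 < cichon h (omegaPow (n + 1)) N0 → toOrd (f (i + 1)) < toOrd (f i)) ∧
      (∀ i, i < cichon h (omegaPow (n + 1)) N0 → cnfNorm (f i) ≤ h^[i] N0)) := by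
  have htop := toOrd_omegaPow (n + 1)
  refine ⟨fun L f hlt hdesc hnorm => ?_, greedySeq h (omegaPow (n + 1)) N0, ?_, ?_, ?_⟩
  · exact le_cichon_of_descending h L (fun hL => htop ▸ hlt 0 hL) hdesc
      (fun i hi => (maxCoeff_le_cnfNorm _).trans (hnorm i hi))
  · exact fun i hi => htop ▸ toOrd_greedySeq_lt h i hi
  · exact fun i hi => toOrd_greedySeq_succ_lt h i hi
  · intro i _
    have hN0i : N0 ≤ h^[i] N0 := Function.id_le_iterate_of_id_le hinfl i N0
    have hlen := length_greedySeq_le h i (omegaPow (n + 1)) N0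
    have hcoeff := maxCoeff_greedySeq_le h hinfl i (omegaPow (n + 1)) N0
    rw [length_omegaPow] at hlen
    rw [maxCoeff_omegaPow] at hcoeff
    exact cnfNorm_le_of_length_le (by omega) (by omega)

open HardyCNF in
/-- length function theorem.  Let `h` be monotone and inflationary
and `N0 ≥ n + 1`.  Every `(N0,h)`-controlled strictly descending sequence of
ordinals `< ω^{n+1}` has length at most `h_{ω^{n+1}}(N0)`, and some
`(N0,h)`-controlled strictly descending sequence of ordinals `< ω^{n+1}` has
exactly that length.  (Ordinals `< ω^ω` are given by little-endian CNF coefficient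
lists, and a sequence of length `L` is `f` restricted to indices `< L`.) -/
theorem length_function_theorem (h : ℕ → ℕ)
    (hmono : ∀ x y, x ≤ y → h x ≤ h y) (hinfl : ∀ x, x ≤ h x)
    (n N0 : ℕ) (hN0 : n + 1 ≤ N0) :
    (∀ (L : ℕ) (f : ℕ → List ℕ),
      (∀ i, i < L → toOrd (f i) < Ordinal.omega0 ^ ((n + 1 : ℕ) : Ordinal)) →
      (∀ i, i + 1 < L → toOrd (f (i + 1)) < toOrd (f i)) →
      (∀ i, i < L → cnfNorm (f i) ≤ h^[i] N0) →
      L ≤ cichon h (omegaPow (n + 1)) N0) ∧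
    (∃ f : ℕ → List ℕ,
      (∀ i, i < cichon h (omegaPow (n + 1)) N0 →
        toOrd (f i) < Ordinal.omega0 ^ ((n + 1 : ℕ) : Ordinal)) ∧
      (∀ i, i + 1 < cichon h (omegaPow (n + 1)) N0 → toOrd (f (i + 1)) < toOrd (f i)) ∧
      (∀ i, i < cichon h (omegaPow (n + 1)) N0 → cnfNorm (f i) ≤ h^[i] N0)) :=
  length_function_theorem_general h hinfl n N0 hN0
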